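/- arXiv:1609.05136 — 4 statements merged into one kernel-verified Lean document; each statement's English description precedes it below -/
import Mathlib

section
/- Let μ be a finite nonnegative measure on [0,1] bounded by M > 0 (i.e., μ([0,1]) ≤ M), absolutely continuous with respect to Lebesgue measure with density bounded by M. If x, x' ∈ C^n satisfy ‖x - x'‖_∞ ≤ τ, and O_+(x), O_+(x') denote the unions of the intervals of the corresponding partitions of [0,1] whose associated coordinates have positive sign, then |μ(O_+(x)) - μ(O_+(x'))| ≤ (n+1)^2 · M · τ. -/
open MeasureTheory

/-- Cut points: `cutPt x k = Σ_{i < k} |x i|`. -/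
noncomputable def cutPt {n : ℕ} (x : Fin (n + 1) → ℝ) (k : ℕ) : ℝ :=
  ∑ i : Fin (n + 1), if (i : ℕ) < k then |x i| else 0

/-- The positive portion of the partition of `[0,1]` encoded by `x`:
the union of the intervals `[t_{k-1}, t_k]` whose coordinate `x k` is nonnegative. -/
noncomputable def Opos {n : ℕ} (x : Fin (n + 1) → ℝ) : Set ℝ :=
  ⋃ k : Fin (n + 1), if 0 ≤ x k then Set.Icc (cutPt x (k : ℕ)) (cutPt x ((k : ℕ) + 1)) else ∅

/-! Each coordinate moves by at most `τ`, so the cut point `t_k` moves by at most `k τ`.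
Hence the `k`-th intervals of `O₊(x)` and `O₊(x')` differ by a set of length at most `(2k + 1) τ`;
if the sign of the `k`-th coordinate flips, that interval has length `|x_k| ≤ τ`. Summing the odd
numbers `2k + 1` bounds the Lebesgue measure of `O₊(x) ∆ O₊(x')` by `(n + 1)² τ`, and the density
bound turns this into `(n + 1)² M τ` for `μ`. -/

open scoped symmDiff
open Set

open Finset in
lemma abs_cutPt_sub_cutPt_le {n : ℕ} {x x' : Fin (n + 1) → ℝ} {τ : ℝ}
    (hclose : ∀ i, |x i - x' i| ≤ τ) (k : ℕ) : |cutPt x k - cutPt x' k| ≤ k * τ := by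
  have hτ : 0 ≤ τ := (abs_nonneg _).trans (hclose 0)
  simp only [cutPt, ← Finset.sum_filter, ← Finset.sum_sub_distrib]
  calc _ ≤ ∑ i ∈ {i : Fin (n + 1) | (i : ℕ) < k}, |x i - x' i| :=
        (Finset.abs_sum_le_sum_abs _ _).trans
          (Finset.sum_le_sum fun i _ => abs_abs_sub_abs_le_abs_sub _ _)
    _ ≤ #{i : Fin (n + 1) | (i : ℕ) < k} • τ := Finset.sum_le_card_nsmul _ _ _ fun i _ => hclose i
    _ ≤ k * τ := by
        rw [nsmul_eq_mul, Fin.card_filter_val_lt]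
        gcongr
        exact_mod_cast min_le_right _ _

lemma cutPt_succ_sub_cutPt {n : ℕ} (x : Fin (n + 1) → ℝ) (k : Fin (n + 1)) :
    cutPt x (k + 1) - cutPt x k = |x k| := by
  simp only [cutPt, ← Finset.sum_sub_distrib]
  rw [Finset.sum_eq_single k]
  · simp
  · intro i _ hik
    have : (i : ℕ) ≠ k := Fin.val_ne_of_ne hik
    split_ifs <;> first | omega | simp
  · simp

lemma Real.volume_Icc_symmDiff_Icc_le (a b a' b' : ℝ) :
    volume (Icc a b ∆ Icc a' b') ≤ ENNReal.ofReal (|a - a'| + |b - b'|) := by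
  have hsub : Icc a b ∆ Icc a' b' ⊆ uIcc a a' ∪ uIcc b b' := by
    intro y
    simp only [mem_symmDiff, mem_Icc, mem_union, mem_uIcc]
    grind
  calc volume (Icc a b ∆ Icc a' b') ≤ volume (uIcc a a') + volume (uIcc b b') :=
        (measure_mono hsub).trans (measure_union_le _ _)
    _ = ENNReal.ofReal (|a - a'| + |b - b'|) := by
        rw [Real.volume_interval, Real.volume_interval, abs_sub_comm a', abs_sub_comm b',
          ENNReal.ofReal_add (abs_nonneg _) (abs_nonneg _)]

lemma sum_range_two_mul_add_one (n : ℕ) : ∑ k ∈ Finset.range n, (2 * (k : ℝ) + 1) = n ^ 2 := by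
  induction n with
  | zero => simp
  | succ m ih => rw [Finset.sum_range_succ, ih]; push_cast; ring

/-- `Opos x = ⋃ k, oposPiece x k` holds definitionally. -/
noncomputable def oposPiece {n : ℕ} (x : Fin (n + 1) → ℝ) (k : Fin (n + 1)) : Set ℝ :=
  if 0 ≤ x k then Icc (cutPt x k) (cutPt x (k + 1)) else ∅

lemma isCompact_oposPiece {n : ℕ} (x : Fin (n + 1) → ℝ) (k : Fin (n + 1)) :
    IsCompact (oposPiece x k) := by
  unfold oposPiece
  split_ifs
  exacts [isCompact_Icc, isCompact_empty]

lemma isCompact_Opos {n : ℕ} (x : Fin (n + 1) → ℝ) : IsCompact (Opos x) :=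
  isCompact_iUnion (isCompact_oposPiece x)

lemma measurableSet_Opos {n : ℕ} (x : Fin (n + 1) → ℝ) : MeasurableSet (Opos x) :=
  (isCompact_Opos x).isClosed.measurableSet

lemma volume_oposPiece_le {n : ℕ} (x : Fin (n + 1) → ℝ) (k : Fin (n + 1)) :
    volume (oposPiece x k) ≤ ENNReal.ofReal |x k| := by
  unfold oposPiece
  split_ifs
  · rw [Real.volume_Icc, cutPt_succ_sub_cutPt]
  · simp

lemma volume_oposPiece_symmDiff_le {n : ℕ} {x x' : Fin (n + 1) → ℝ} {τ : ℝ}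
    (hclose : ∀ i, |x i - x' i| ≤ τ) (k : Fin (n + 1)) :
    volume (oposPiece x k ∆ oposPiece x' k) ≤ ENNReal.ofReal ((2 * k + 1) * τ) := by
  have hτ : 0 ≤ τ := (abs_nonneg _).trans (hclose 0)
  have sign_change {a b : ℝ} (ha : 0 ≤ a) (hb : b < 0) (hab : |a - b| ≤ τ) :
      |a| ≤ (2 * k + 1) * τ := by
    rw [abs_of_nonneg ha]
    nlinarith [le_abs_self (a - b), (k : ℕ).cast_nonneg (α := ℝ)]
  by_cases hk : 0 ≤ x k <;> by_cases hk' : 0 ≤ x' k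
  · simp only [oposPiece, hk, hk', if_true]
    refine (Real.volume_Icc_symmDiff_Icc_le ..).trans (ENNReal.ofReal_le_ofReal ?_)
    have h₀ := abs_cutPt_sub_cutPt_le hclose k
    have h₁ := abs_cutPt_sub_cutPt_le hclose (k + 1)
    push_cast at h₁
    linarith
  · rw [show oposPiece x' k = ⊥ from if_neg hk', symmDiff_bot]
    exact (volume_oposPiece_le x k).trans
      (ENNReal.ofReal_le_ofReal (sign_change hk (not_le.mp hk') (hclose k)))
  · rw [show oposPiece x k = ⊥ from if_neg hk, bot_symmDiff]
    exact (volume_oposPiece_le x' k).trans (ENNReal.ofReal_le_ofReal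
      (sign_change hk' (not_le.mp hk) (abs_sub_comm (x k) (x' k) ▸ hclose k)))
  · simp [oposPiece, hk, hk']

lemma volume_Opos_symmDiff_le {n : ℕ} {x x' : Fin (n + 1) → ℝ} {τ : ℝ}
    (hclose : ∀ i, |x i - x' i| ≤ τ) :
    volume (Opos x ∆ Opos x') ≤ ENNReal.ofReal ((n + 1) ^ 2 * τ) := by
  have hτ : 0 ≤ τ := (abs_nonneg _).trans (hclose 0)
  calc volume (Opos x ∆ Opos x') ≤ ∑ k, volume (oposPiece x k ∆ oposPiece x' k) :=
        (measure_mono iUnion_symmDiff_iUnion_subset).trans (measure_iUnion_fintype_le _ _)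
    _ ≤ ∑ k : Fin (n + 1), ENNReal.ofReal ((2 * k + 1) * τ) :=
        Finset.sum_le_sum fun k _ => volume_oposPiece_symmDiff_le hclose k
    _ = ENNReal.ofReal ((n + 1) ^ 2 * τ) := by
        rw [← ENNReal.ofReal_sum_of_nonneg fun k _ => by positivity, ← Finset.sum_mul,
          Fin.sum_univ_eq_sum_range (fun k => 2 * (k : ℝ) + 1), sum_range_two_mul_add_one]
        push_cast
        rfl

theorem opos_value_lipschitz_general (n : ℕ) (M τ : ℝ) (hM : 0 < M)
    (μ : Measure ℝ)
    (hdensity : ∀ s : Set ℝ, MeasurableSet s → μ s ≤ ENNReal.ofReal M * volume s)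
    (x x' : Fin (n + 1) → ℝ)
    (hclose : ∀ i, |x i - x' i| ≤ τ) :
    |(μ (Opos x)).toReal - (μ (Opos x')).toReal| ≤ ((n : ℝ) + 1) ^ 2 * M * τ := by
  have hτ : 0 ≤ τ := (abs_nonneg _).trans (hclose 0)
  have hfin (y : Fin (n + 1) → ℝ) : μ (Opos y) ≠ ⊤ :=
    ne_top_of_le_ne_top (ENNReal.mul_ne_top ENNReal.ofReal_ne_top
      (isCompact_Opos y).measure_lt_top.ne) (hdensity _ (measurableSet_Opos y))
  have hsymm : μ (Opos x ∆ Opos x') ≤ ENNReal.ofReal ((n + 1) ^ 2 * M * τ) :=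
    calc μ (Opos x ∆ Opos x') ≤ ENNReal.ofReal M * volume (Opos x ∆ Opos x') :=
          hdensity _ ((measurableSet_Opos x).symmDiff (measurableSet_Opos x'))
      _ ≤ ENNReal.ofReal M * ENNReal.ofReal ((n + 1) ^ 2 * τ) :=
          mul_le_mul_right (volume_Opos_symmDiff_le hclose) _
      _ = ENNReal.ofReal ((n + 1) ^ 2 * M * τ) := by
          rw [← ENNReal.ofReal_mul hM.le]
          ring_nf
  calc |(μ (Opos x)).toReal - (μ (Opos x')).toReal| ≤ μ.real (Opos x ∆ Opos x') :=
        abs_measureReal_sub_le_measureReal_symmDiff' (measurableSet_Opos x).nullMeasurableSet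
          (measurableSet_Opos x').nullMeasurableSet (hfin x) (hfin x')
    _ ≤ ((n : ℝ) + 1) ^ 2 * M * τ := ENNReal.toReal_le_of_le_ofReal (by positivity) hsymm

/-- Lipschitz-type continuity of the value of the positive portion: if `μ` is a finite
nonnegative measure on `[0,1]` bounded by `M`, absolutely continuous with density bounded
by `M`, and `x, x' ∈ C^n` satisfy `‖x - x'‖_∞ ≤ τ`, then
`|μ(O₊(x)) - μ(O₊(x'))| ≤ (n+1)² · M · τ`. -/
theorem opos_value_lipschitz (n : ℕ) (M τ : ℝ) (hM : 0 < M) (hτ : 0 ≤ τ)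
    (μ : Measure ℝ)
    (hbound : μ (Set.Icc (0 : ℝ) 1) ≤ ENNReal.ofReal M)
    (hdensity : ∀ s : Set ℝ, MeasurableSet s → μ s ≤ ENNReal.ofReal M * volume s)
    (x x' : Fin (n + 1) → ℝ) (hx : ∑ i, |x i| = 1) (hx' : ∑ i, |x' i| = 1)
    (hclose : ∀ i, |x i - x' i| ≤ τ) :
    |(μ (Opos x)).toReal - (μ (Opos x')).toReal| ≤ ((n : ℝ) + 1) ^ 2 * M * τ :=
  opos_value_lipschitz_general n M τ hM μ hdensity x x' hclose
end

section
/- Under the setting of the Simmons–Su labeling: if z and z' are adjacent vertices of the triangulation T (mesh fine enough that |μ_i(O_+(z)) - μ_i(O_+(z'))| ≤ ε/2 and |μ_i(O_-(z)) - μ_i(O_-(z'))| ≤ ε/2 for all i), and z is labeled +k while z' is labeled -k (a complementary edge), then the partition corresponding to z is an ε-approximate consensus-halving: |μ_i(O_+(z)) - μ_i(O_-(z))| ≤ ε for all i = 1, ..., n. -/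
open MeasureTheory

/-- The negative portion of the partition encoded by `x`. -/
noncomputable def Oneg {n : ℕ} (x : Fin (n + 1) → ℝ) : Set ℝ :=
  ⋃ k : Fin (n + 1), if x k < 0 then Set.Icc (cutPt x (k : ℕ)) (cutPt x ((k : ℕ) + 1)) else ∅

/-- The (signed) discrepancy of the measure `μ` at the partition encoded by `x`. -/
noncomputable def disc {n : ℕ} (μ : Measure ℝ) (x : Fin (n + 1) → ℝ) : ℝ :=
  (μ (Opos x)).toReal - (μ (Oneg x)).toReal

/-! The labeling rule makes agent `k` the one of maximal discrepancy at `z`, and the discrepancy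
of `k` changes sign along the edge `z z'`. A sign change bounds `|disc (μ k) z|` by the variation
of `disc (μ k)` along the edge, which the mesh condition splits into two halves of `ε`. -/

theorem abs_le_abs_sub_of_nonneg_of_nonpos {G : Type*} [AddCommGroup G] [LinearOrder G]
    [IsOrderedAddMonoid G] {a b : G} (ha : 0 ≤ a) (hb : b ≤ 0) : |a| ≤ |a - b| :=
  (abs_of_nonneg ha).trans_le (((le_sub_self_iff a).2 hb).trans (le_abs_self _))

theorem abs_disc_sub_disc_le {n : ℕ} (ν : Measure ℝ) (z z' : Fin (n + 1) → ℝ) :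
    |disc ν z - disc ν z'| ≤ |(ν (Opos z)).toReal - (ν (Opos z')).toReal|
      + |(ν (Oneg z)).toReal - (ν (Oneg z')).toReal| := by
  have hsplit : disc ν z - disc ν z' = ((ν (Opos z)).toReal - (ν (Opos z')).toReal)
      - ((ν (Oneg z)).toReal - (ν (Oneg z')).toReal) := by
    unfold disc; ring
  rw [hsplit]
  exact abs_sub _ _

theorem complementary_edge_gives_solution_general (n : ℕ) (μ : Fin n → Measure ℝ)
    (ε : ℝ)
    (z z' : Fin (n + 1) → ℝ)
    (k : Fin n)
    (hmesh_pos : ∀ i, |(μ i (Opos z)).toReal - (μ i (Opos z')).toReal| ≤ ε / 2)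
    (hmesh_neg : ∀ i, |(μ i (Oneg z)).toReal - (μ i (Oneg z')).toReal| ≤ ε / 2)
    (hmax : ∀ i, |disc (μ i) z| ≤ |disc (μ k) z|)
    (hpos : 0 < disc (μ k) z)
    (hneg : disc (μ k) z' < 0) :
    ∀ i, |disc (μ i) z| ≤ ε := by
  intro i
  calc |disc (μ i) z|
      ≤ |disc (μ k) z| := hmax i
    _ ≤ |disc (μ k) z - disc (μ k) z'| := abs_le_abs_sub_of_nonneg_of_nonpos hpos.le hneg.le
    _ ≤ |(μ k (Opos z)).toReal - (μ k (Opos z')).toReal|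
          + |(μ k (Oneg z)).toReal - (μ k (Oneg z')).toReal| := abs_disc_sub_disc_le (μ k) z z'
    _ ≤ ε / 2 + ε / 2 := add_le_add (hmesh_pos k) (hmesh_neg k)
    _ = ε := add_halves ε

/-- **A complementary edge yields an ε-approximate consensus halving.** If `z, z'` are
adjacent vertices (the mesh is fine enough that `|μᵢ(O₊(z)) - μᵢ(O₊(z'))| ≤ ε/2` and
`|μᵢ(O₋(z)) - μᵢ(O₋(z'))| ≤ ε/2` for all `i`), `z` is labeled `+k` (agent `k` has maximal
discrepancy at `z`, and it is positive) and `z'` is labeled `-k` (the discrepancy of agent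
`k` at `z'` is negative), then the partition encoded by `z` is an `ε`-approximate
consensus halving: `|μᵢ(O₊(z)) - μᵢ(O₋(z))| ≤ ε` for all `i`. -/
theorem complementary_edge_gives_solution (n : ℕ) (μ : Fin n → Measure ℝ)
    [∀ i, IsFiniteMeasure (μ i)]
    (ε : ℝ) (hε : 0 ≤ ε)
    (z z' : Fin (n + 1) → ℝ) (hz : ∑ i, |z i| = 1) (hz' : ∑ i, |z' i| = 1)
    (k : Fin n)
    (hmesh_pos : ∀ i, |(μ i (Opos z)).toReal - (μ i (Opos z')).toReal| ≤ ε / 2)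
    (hmesh_neg : ∀ i, |(μ i (Oneg z)).toReal - (μ i (Oneg z')).toReal| ≤ ε / 2)
    (hmax : ∀ i, |disc (μ i) z| ≤ |disc (μ k) z|)
    (hpos : 0 < disc (μ k) z)
    (hneg : disc (μ k) z' < 0) :
    ∀ i, |disc (μ i) z| ≤ ε :=
  complementary_edge_gives_solution_general n μ ε z z' k hmesh_pos hmesh_neg hmax hpos hneg
end

section
/- For x, y ∈ [0,1], define via the generalized-circuit operations: a = max(x - y, 0), b = max(y - x, 0), c = min(a + b, 1), d = c/2, ℓ = x/2 + y/2 (computed as min of sum, which never clamps), m1 = max(ℓ - d, 0), m2 = min(ℓ + d, 1). Then m1 = min(x, y) and m2 = max(x, y). -/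
/-! The gadget computes `c = |x - y|` as the sum of the positive and negative parts of `x - y`,
and then `ℓ ∓ c/2 = (x + y ∓ |x - y|)/2` are `min x y` and `max x y`. On `[0,1]` none of the
truncations `min (·) 1`, `max (·) 0` is active, since `|x - y| ≤ 1`, `0 ≤ min x y` and
`max x y ≤ 1`. -/

section LinearOrderedAddCommGroup

variable {α : Type*} [AddCommGroup α] [LinearOrder α] [IsOrderedAddMonoid α]

theorem max_sub_zero_add_max_sub_zero (x y : α) : max (x - y) 0 + max (y - x) 0 = |x - y| := by
  rw [← neg_sub x y]
  exact posPart_add_negPart (x - y)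

end LinearOrderedAddCommGroup

section LinearOrderedField

variable {α : Type*} [Field α] [LinearOrder α] [IsStrictOrderedRing α]

theorem half_add_half_sub_half_abs_sub (x y : α) : x / 2 + y / 2 - |x - y| / 2 = min x y := by
  have h := two_nsmul_inf_eq_add_sub_abs_sub x y
  rw [two_nsmul, abs_sub_comm] at h
  linarith

theorem half_add_half_add_half_abs_sub (x y : α) : x / 2 + y / 2 + |x - y| / 2 = max x y := by
  have h := two_nsmul_sup_eq_add_add_abs_sub x y
  rw [two_nsmul, abs_sub_comm] at h
  linarith

end LinearOrderedField

/-- **Exact correctness of the min/max gadget** (Algorithm 2): for `x, y ∈ [0,1]`,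
setting `a = max(x - y, 0)`, `b = max(y - x, 0)`, `c = min(a + b, 1)`, `d = c/2`,
`ℓ = x/2 + y/2`, `m₁ = max(ℓ - d, 0)` and `m₂ = min(ℓ + d, 1)`, one has
`m₁ = min x y` and `m₂ = max x y`. -/
theorem minmax_gadget_correct (x y : ℝ)
    (hx : x ∈ Set.Icc (0 : ℝ) 1) (hy : y ∈ Set.Icc (0 : ℝ) 1)
    (a b c d l m1 m2 : ℝ)
    (ha : a = max (x - y) 0) (hb : b = max (y - x) 0)
    (hc : c = min (a + b) 1) (hd : d = c / 2)
    (hl : l = x / 2 + y / 2)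
    (hm1 : m1 = max (l - d) 0) (hm2 : m2 = min (l + d) 1) :
    m1 = min x y ∧ m2 = max x y := by
  have hc_abs : c = |x - y| := by
    rw [hc, ha, hb, max_sub_zero_add_max_sub_zero,
      min_eq_left (abs_sub_le_of_nonneg_of_le hx.1 hx.2 hy.1 hy.2)]
  have hlow : l - d = min x y := by
    rw [hl, hd, hc_abs, half_add_half_sub_half_abs_sub]
  have hhigh : l + d = max x y := by
    rw [hl, hd, hc_abs, half_add_half_add_half_abs_sub]
  constructor
  · rw [hm1, hlow, max_eq_left (le_min hx.1 hy.1)]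
  · rw [hm2, hhigh, min_eq_left (max_le hx.2 hy.2)]
end

section
/- Let μ be a nonatomic finite measure on [0,1] and define f: C^n → R by f(x) = μ(O_+(x)) - μ(O_-(x)), where (O_+(x), O_-(x)) is the n-cut partition of [0,1] encoded by x ∈ C^n. Then f is continuous and odd: f(-x) = -f(x) for all x ∈ C^n. -/
open MeasureTheory Set Filter Topology Function

/-!
Write `F t = μ (Iic t)` and `tₖ = cutPt x k`. The cut intervals of `x` overlap only in their
endpoints, which are `μ`-null, so
`disc μ x = ∑ₖ sign (x k) * μ (Icc tₖ tₖ₊₁) = ∑ₖ sign (x k) * (F tₖ₊₁ - F tₖ)`.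
Since `μ` has no atoms, `F` is continuous; the jump of `sign (x k)` at `x k = 0` does no harm
because the `k`-th interval is then a single point. Negating `x` keeps every cut point and flips
every sign.
-/

theorem measureReal_iUnion_ite_empty {ι α : Type*} [Fintype ι] [MeasurableSpace α]
    {ν : Measure α} [IsFiniteMeasure ν] {s : ι → Set α} (hd : Pairwise (AEDisjoint ν on s))
    (hm : ∀ i, NullMeasurableSet (s i) ν) (p : ι → Prop) [DecidablePred p] :
    ν.real (⋃ i, if p i then s i else ∅) = ∑ i, if p i then ν.real (s i) else 0 := by
  have hunion : (⋃ i, if p i then s i else ∅) = ⋃ i ∈ Finset.univ.filter p, s i := by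
    ext; simp
  rw [hunion, measureReal_biUnion_finset₀ (hd.set_pairwise _) fun i _ => hm i, Finset.sum_filter]

theorem Continuous.sign_mul {X : Type*} [TopologicalSpace X] {h d : X → ℝ} (hh : Continuous h)
    (hd : Continuous d) (hzero : ∀ x, h x = 0 → d x = 0) :
    Continuous fun x => Real.sign (h x) * d x := by
  refine continuous_iff_continuousAt.2 fun x₀ => ?_
  rcases lt_trichotomy (h x₀) 0 with hneg | hzero₀ | hpos
  · refine hd.neg.continuousAt.congr ?_
    filter_upwards [hh.continuousAt.eventually_lt continuousAt_const hneg] with x hx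
    simp [Real.sign_of_neg hx]
  · have hd₀ : Tendsto d (𝓝 x₀) (𝓝 0) := hzero x₀ hzero₀ ▸ hd.tendsto x₀
    rw [ContinuousAt, hzero x₀ hzero₀, mul_zero]
    refine squeeze_zero_norm (a := fun x => ‖d x‖) (fun x => ?_) (by simpa using hd₀.norm)
    rw [norm_mul]
    refine mul_le_of_le_one_left (norm_nonneg _) ?_
    rcases Real.sign_apply_eq (h x) with hs | hs | hs <;> simp [hs]
  · refine hd.continuousAt.congr ?_
    filter_upwards [continuousAt_const.eventually_lt hh.continuousAt hpos] with x hx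
    simp [Real.sign_of_pos hx]

theorem Monotone.pairwise_aedisjoint_Icc {μ : Measure ℝ} [NullSingletonClass μ] {t : ℕ → ℝ}
    (ht : Monotone t) : Pairwise (AEDisjoint μ on fun k => Icc (t k) (t (k + 1))) := by
  refine (Std.Symm.pairwise_on _).2 fun j k hjk => measure_mono_null ?_ (measure_singleton (t k))
  rintro y ⟨⟨-, hyj⟩, ⟨hky, -⟩⟩
  exact le_antisymm (hyj.trans (ht hjk)) hky

section Measure

variable {μ : Measure ℝ} [IsFiniteMeasure μ] [NullSingletonClass μ]

theorem measureReal_Icc_eq_sub {a b : ℝ} (hab : a ≤ b) :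
    μ.real (Icc a b) = μ.real (Iic b) - μ.real (Iic a) := by
  rw [← measureReal_congr (Ioc_ae_eq_Icc (μ := μ)), ← Iic_sdiff_Iic,
    measureReal_sdiff (Iic_subset_Iic.2 hab) measurableSet_Iic]

theorem continuous_measureReal_Iic : Continuous fun t => μ.real (Iic t) := by
  refine continuous_iff_continuousAt.2 fun b => ?_
  have hsmall : Tendsto (fun t => μ.real (Icc (b - |t - b|) (b + |t - b|))) (𝓝 b) (𝓝 0) := by
    have hδ : Tendsto (fun t => |t - b|) (𝓝 b) (𝓝 0) :=
      (continuous_sub_right b).abs.tendsto' b 0 (by simp)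
    simpa [comp_def, measureReal_def] using (ENNReal.tendsto_toReal ENNReal.zero_ne_top).comp
      ((tendsto_measure_Icc μ b).comp hδ)
  rw [ContinuousAt, tendsto_iff_dist_tendsto_zero]
  refine squeeze_zero (fun _ => dist_nonneg) (fun t => ?_) hsmall
  rw [Real.dist_eq]
  obtain ⟨htb, hbt⟩ := abs_sub_le_iff.1 (le_refl |t - b|)
  rcases le_total t b with h | h
  · rw [abs_sub_comm, ← measureReal_Icc_eq_sub h, abs_of_nonneg measureReal_nonneg]
    exact measureReal_mono (Icc_subset_Icc (by linarith) (by linarith))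
  · rw [← measureReal_Icc_eq_sub h, abs_of_nonneg measureReal_nonneg]
    exact measureReal_mono (Icc_subset_Icc (by linarith) (by linarith))

end Measure

section cutPt

variable {n : ℕ}

theorem cutPt_succ (x : Fin (n + 1) → ℝ) (k : Fin (n + 1)) :
    cutPt x (k + 1) = cutPt x k + |x k| := by
  have hsplit : ∀ i : Fin (n + 1), (if (i : ℕ) < k + 1 then |x i| else 0)
      = (if (i : ℕ) < k then |x i| else 0) + if i = k then |x i| else 0 := by
    intro i
    grind
  simp only [cutPt, hsplit, Finset.sum_add_distrib, Finset.sum_ite_eq', Finset.mem_univ, if_true]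

theorem cutPt_mono (x : Fin (n + 1) → ℝ) : Monotone (cutPt x) := fun j k hjk =>
  Finset.sum_le_sum fun i _ => by split_ifs <;> first | rfl | exact abs_nonneg _ | omega

theorem continuous_cutPt (k : ℕ) : Continuous fun x : Fin (n + 1) → ℝ => cutPt x k := by
  refine continuous_finsetSum _ fun i _ => ?_
  split_ifs
  exacts [(continuous_apply i).abs, continuous_const]

theorem cutPt_neg (x : Fin (n + 1) → ℝ) (k : ℕ) : cutPt (-x) k = cutPt x k := by
  simp [cutPt]

variable {μ : Measure ℝ} [NullSingletonClass μ]

theorem measureReal_Icc_cutPt_eq_zero {x : Fin (n + 1) → ℝ} {k : Fin (n + 1)} (hx : x k = 0) :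
    μ.real (Icc (cutPt x k) (cutPt x (k + 1))) = 0 := by
  simp [cutPt_succ, hx, measureReal_def]

variable [IsFiniteMeasure μ]

theorem continuous_measureReal_Icc_cutPt (k : ℕ) :
    Continuous fun x : Fin (n + 1) → ℝ => μ.real (Icc (cutPt x k) (cutPt x (k + 1))) :=
  ((continuous_measureReal_Iic.comp (continuous_cutPt _)).sub
    (continuous_measureReal_Iic.comp (continuous_cutPt _))).congr fun x =>
      (measureReal_Icc_eq_sub (cutPt_mono x k.le_succ)).symm

theorem disc_eq_sum_sign_mul (x : Fin (n + 1) → ℝ) :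
    disc μ x = ∑ k : Fin (n + 1), Real.sign (x k) * μ.real (Icc (cutPt x k) (cutPt x (k + 1))) := by
  have hd : Pairwise (AEDisjoint μ on fun k : Fin (n + 1) => Icc (cutPt x k) (cutPt x (k + 1))) :=
    (cutPt_mono x).pairwise_aedisjoint_Icc.comp_of_injective Fin.val_injective
  have hm : ∀ k : Fin (n + 1), NullMeasurableSet (Icc (cutPt x k) (cutPt x (k + 1))) μ :=
    fun _ => nullMeasurableSet_Icc
  change μ.real (Opos x) - μ.real (Oneg x) = _
  rw [Opos, Oneg, measureReal_iUnion_ite_empty hd hm, measureReal_iUnion_ite_empty hd hm,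
    ← Finset.sum_sub_distrib]
  refine Finset.sum_congr rfl fun k _ => ?_
  rcases lt_trichotomy (x k) 0 with h | h | h
  · simp [h, h.not_ge, Real.sign_of_neg h]
  · simp [h, measureReal_Icc_cutPt_eq_zero h]
  · simp [h.le, h.not_gt, Real.sign_of_pos h]

end cutPt

/-- For a nonatomic finite measure `μ` on `[0,1]`, the function
`f(x) = μ(O₊(x)) - μ(O₋(x))` on `C^n = {x : Σ|xᵢ| = 1}` is continuous and odd:
`f(-x) = -f(x)` for all `x ∈ C^n`. -/
theorem disc_continuousOn_and_odd (n : ℕ) (μ : Measure ℝ)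
    [IsFiniteMeasure μ] [NullSingletonClass μ] :
    ContinuousOn (fun x : Fin (n + 1) → ℝ => disc μ x)
      {x : Fin (n + 1) → ℝ | ∑ i, |x i| = 1} ∧
    ∀ x ∈ {x : Fin (n + 1) → ℝ | ∑ i, |x i| = 1}, disc μ (-x) = -disc μ x := by
  refine ⟨Continuous.continuousOn ?_, fun x _ => ?_⟩
  · simp_rw [disc_eq_sum_sign_mul]
    refine continuous_finsetSum _ fun k _ =>
      (continuous_apply k).sign_mul (continuous_measureReal_Icc_cutPt k) fun _ =>
      measureReal_Icc_cutPt_eq_zero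
  · simp only [disc_eq_sum_sign_mul, cutPt_neg, Pi.neg_apply, Real.sign_neg, neg_mul,
      Finset.sum_neg_distrib]
end
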